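/- Suppose ς : Γ → ℝ is a C² function on a finite metric graph (finitely many edges, possibly some infinite), satisfying −ε²ς'' = (λ−λ₀)ς on each edge with λ < λ₀, decaying at infinity on infinite edges, and at each vertex each component of the restriction vector ς^{(v)} satisfies either ς_j(0) = 0 or ς_j'(0) = 0 (in a suitable orthogonal coordinate frame), and at degree-1 vertices a Robin condition ες' + aς = 0 with a ≥ 0. Then ς ≡ 0. (Energy identity: 0 = ∫_Γ [ε²(ς')² − (λ−λ₀)ς²] minus non-negative boundary terms forces ς = 0.) -/

import Mathlib

/-!
With `k = (λ₀ - λ) / ε² > 0` every edge function satisfies `u'' = k u`, so the flux `P = u u'`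
has `P' = u'² + k u² ≥ 0`. The vertex conditions say that the flux out of the edge is
nonpositive at each endpoint: `P ≥ 0` where the edge starts and `P ≤ 0` where it ends.
On a bounded edge a monotone `P` with these boundary signs vanishes identically, hence so does
`P' = u'² + k u²`. On an unbounded edge `P ≥ 0` makes `u²` nondecreasing, as `(u²)' = 2P`, and a
nondecreasing nonnegative function tending to `0` is `0`.
-/

open Set Filter

lemma monotoneOn_of_forall_hasDerivAt_nonneg {s : Set ℝ} (hs : Convex ℝ s) {f f' : ℝ → ℝ}
    (hf : ∀ t ∈ s, HasDerivAt f (f' t) t) (hf' : ∀ t ∈ s, 0 ≤ f' t) : MonotoneOn f s :=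
  monotoneOn_of_hasDerivWithinAt_nonneg hs
    (fun t ht => (hf t ht).continuousAt.continuousWithinAt)
    (fun t ht => (hf t (interior_subset ht)).hasDerivWithinAt)
    (fun t ht => hf' t (interior_subset ht))

lemma mul_nonneg_of_dirichlet_or_neumann_or_robin {ε v d : ℝ} (hε : 0 < ε)
    (h : v = 0 ∨ d = 0 ∨ ∃ a : ℝ, 0 ≤ a ∧ ε * (-d) + a * v = 0) : 0 ≤ v * d := by
  rcases h with rfl | rfl | ⟨a, ha, hrobin⟩
  · simp
  · simp
  · have hflux : ε * (v * d) = a * v ^ 2 := by linear_combination -v * hrobin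
    exact (mul_nonneg_iff_of_pos_left hε).mp (hflux ▸ by positivity)

lemma mul_nonpos_of_dirichlet_or_neumann_or_robin {ε v d : ℝ} (hε : 0 < ε)
    (h : v = 0 ∨ d = 0 ∨ ∃ a : ℝ, 0 ≤ a ∧ ε * d + a * v = 0) : v * d ≤ 0 := by
  have := mul_nonneg_of_dirichlet_or_neumann_or_robin (d := -d) hε <| by
    simpa only [neg_eq_zero, neg_neg] using h
  linarith

section Flux

variable {k : ℝ} {u u' : ℝ → ℝ}

lemma hasDerivAt_mul_deriv {t : ℝ} (hu : HasDerivAt u (u' t) t)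
    (hu' : HasDerivAt u' (k * u t) t) :
    HasDerivAt (fun s => u s * u' s) (u' t ^ 2 + k * u t ^ 2) t :=
  (hu.fun_mul hu').congr_deriv (by ring)

lemma monotoneOn_mul_deriv {s : Set ℝ} (hs : Convex ℝ s) (hk : 0 ≤ k)
    (hu : ∀ t ∈ s, HasDerivAt u (u' t) t) (hu' : ∀ t ∈ s, HasDerivAt u' (k * u t) t) :
    MonotoneOn (fun t => u t * u' t) s :=
  monotoneOn_of_forall_hasDerivAt_nonneg hs
    (fun t ht => hasDerivAt_mul_deriv (hu t ht) (hu' t ht)) (fun t _ => by positivity)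

theorem eqOn_zero_Icc_of_flux {a b : ℝ} (hk : 0 < k) (hab : a < b)
    (hu : ∀ t ∈ Icc a b, HasDerivAt u (u' t) t) (hu' : ∀ t ∈ Icc a b, HasDerivAt u' (k * u t) t)
    (ha : 0 ≤ u a * u' a) (hb : u b * u' b ≤ 0) : ∀ t ∈ Icc a b, u t = 0 := by
  have hmono := monotoneOn_mul_deriv (convex_Icc a b) hk.le hu hu'
  have hflux : ∀ t ∈ Icc a b, u t * u' t = 0 := fun t ht =>
    le_antisymm ((hmono ht (right_mem_Icc.2 hab.le) ht.2).trans hb)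
      (ha.trans (hmono (left_mem_Icc.2 hab.le) ht ht.1))
  intro t ht
  -- `u u'` is constant on `Icc a b`, so its one-sided derivative vanishes even at the endpoints.
  have hderiv : u' t ^ 2 + k * u t ^ 2 = 0 :=
    (uniqueDiffOn_Icc hab t ht).eq_deriv _
      (hasDerivAt_mul_deriv (hu t ht) (hu' t ht)).hasDerivWithinAt
      ((hasDerivWithinAt_const t _ 0).congr hflux (hflux t ht))
  have : k * u t ^ 2 = 0 := le_antisymm (by linarith [sq_nonneg (u' t)]) (by positivity)
  simpa [hk.ne'] using this

theorem eqOn_zero_Ici_of_flux_of_tendsto {a : ℝ} (hk : 0 ≤ k)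
    (hu : ∀ t ∈ Ici a, HasDerivAt u (u' t) t) (hu' : ∀ t ∈ Ici a, HasDerivAt u' (k * u t) t)
    (hdecay : Tendsto u atTop (nhds 0)) (ha : 0 ≤ u a * u' a) : ∀ t ∈ Ici a, u t = 0 := by
  have hflux : ∀ t ∈ Ici a, 0 ≤ u t * u' t := fun t ht =>
    ha.trans (monotoneOn_mul_deriv (convex_Ici a) hk hu hu' self_mem_Ici ht ht)
  have hsq : MonotoneOn (fun t => u t * u t) (Ici a) :=
    monotoneOn_of_forall_hasDerivAt_nonneg (convex_Ici a)
      (fun t ht => (hu t ht).fun_mul (hu t ht)) (fun t ht => by linarith [hflux t ht])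
  have hsq_decay : Tendsto (fun t => u t * u t) atTop (nhds 0) := by
    simpa using hdecay.mul hdecay
  intro t ht
  have hle : u t * u t ≤ 0 := ge_of_tendsto hsq_decay <| by
    filter_upwards [eventually_ge_atTop t] with s hs
    exact hsq ht (mem_Ici.2 (ht.trans hs)) hs
  exact mul_self_eq_zero.mp (le_antisymm hle (mul_self_nonneg _))

end Flux

/-- energy/uniqueness on a finite metric graph for λ < λ₀.
The graph has N₁ bounded edges (parametrized by [0, L e]) and N₂ unbounded edges
(parametrized by [0,∞)); ς solves −ε²ς'' = (λ−λ₀)ς on each edge, decays at infinity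
on infinite edges, and at every edge endpoint (vertex) the corresponding component
satisfies a Dirichlet (ς = 0) or Neumann (ς' = 0) condition, or a Robin condition
ε ∂_out ς + a ς = 0 with a ≥ 0 (∂_out the outward derivative). Then ς ≡ 0. -/
theorem stmt13 {N₁ N₂ : ℕ} (ε lam lam0 : ℝ) (hε : 0 < ε) (hlt : lam < lam0)
    (L : Fin N₁ → ℝ) (hL : ∀ e, 0 < L e)
    (u u' u'' : Fin N₁ → ℝ → ℝ) (w w' w'' : Fin N₂ → ℝ → ℝ)
    (hu1 : ∀ e, ∀ t ∈ Set.Icc 0 (L e), HasDerivAt (u e) (u' e t) t)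
    (hu2 : ∀ e, ∀ t ∈ Set.Icc 0 (L e), HasDerivAt (u' e) (u'' e t) t)
    (huode : ∀ e, ∀ t ∈ Set.Icc 0 (L e), -(ε^2) * u'' e t = (lam - lam0) * u e t)
    (hw1 : ∀ e, ∀ t ∈ Set.Ici (0 : ℝ), HasDerivAt (w e) (w' e t) t)
    (hw2 : ∀ e, ∀ t ∈ Set.Ici (0 : ℝ), HasDerivAt (w' e) (w'' e t) t)
    (hwode : ∀ e, ∀ t ∈ Set.Ici (0 : ℝ), -(ε^2) * w'' e t = (lam - lam0) * w e t)
    (hwdecay : ∀ e, Filter.Tendsto (w e) Filter.atTop (nhds 0))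
    -- vertex conditions at the left endpoint t = 0 of bounded edges
    (hu0 : ∀ e, u e 0 = 0 ∨ u' e 0 = 0 ∨
        ∃ a : ℝ, 0 ≤ a ∧ ε * (-(u' e 0)) + a * u e 0 = 0)
    -- vertex conditions at the right endpoint t = L e of bounded edges
    (huL : ∀ e, u e (L e) = 0 ∨ u' e (L e) = 0 ∨
        ∃ a : ℝ, 0 ≤ a ∧ ε * (u' e (L e)) + a * u e (L e) = 0)
    -- vertex conditions at the endpoint t = 0 of unbounded edges
    (hw0 : ∀ e, w e 0 = 0 ∨ w' e 0 = 0 ∨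
        ∃ a : ℝ, 0 ≤ a ∧ ε * (-(w' e 0)) + a * w e 0 = 0) :
    (∀ e, ∀ t ∈ Set.Icc 0 (L e), u e t = 0) ∧
    (∀ e, ∀ t ∈ Set.Ici (0 : ℝ), w e t = 0) := by
  set k := (lam0 - lam) / ε ^ 2
  have hk : 0 < k := div_pos (sub_pos.2 hlt) (by positivity)
  have hode {y y'' : ℝ} (h : -(ε ^ 2) * y'' = (lam - lam0) * y) : y'' = k * y := by
    rw [div_mul_eq_mul_div, eq_div_iff (by positivity)]
    linarith
  refine ⟨fun e => ?_, fun e => ?_⟩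
  · exact eqOn_zero_Icc_of_flux hk (hL e) (hu1 e)
      (fun t ht => hode (huode e t ht) ▸ hu2 e t ht)
      (mul_nonneg_of_dirichlet_or_neumann_or_robin hε (hu0 e))
      (mul_nonpos_of_dirichlet_or_neumann_or_robin hε (huL e))
  · exact eqOn_zero_Ici_of_flux_of_tendsto hk.le (hw1 e)
      (fun t ht => hode (hwode e t ht) ▸ hw2 e t ht) (hwdecay e)
      (mul_nonneg_of_dirichlet_or_neumann_or_robin hε (hw0 e))
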